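/- Assume (g1) and (g3) for the numerical Hamiltonian g. Let ψ : (0,∞) → ℝ be nondecreasing, concave and differentiable. Then for any grid function v, any grid function m with m_{i,j} > 0 for all i,j, and any η > 0: Σ_{i,j} 𝒯_{i,j}(v, m) ψ(m_{i,j}) ≤ (η/2) Σ_{i,j} [∇_h ψ(m)]_{i,j} · [∇_h m]_{i,j} + (1/(2η)) Σ_{i,j} m_{i,j}² ψ′(m_{i,j}) [ (g_{q₁}(x_{i,j},[∇_h v]_{i,j}))² 𝟙_{m_{i+1,j} > m_{i,j}} + (g_{q₂}(x_{i,j},[∇_h v]_{i,j}))² 𝟙_{m_{i−1,j} > m_{i,j}} + (g_{q₃}(x_{i,j},[∇_h v]_{i,j}))² 𝟙_{m_{i,j+1} > m_{i,j}} + (g_{q₄}(x_{i,j},[∇_h v]_{i,j}))² 𝟙_{m_{i,j−1} > m_{i,j}} ], where ψ(m) denotes the grid function (ψ(m_{i,j}))_{i,j} and 𝟙_A equals 1 if condition A holds and 0 otherwise. -/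

import Mathlib

open Finset

noncomputable section

abbrev Torus : Type := AddCircle (1:ℝ) × AddCircle (1:ℝ)

/-- The grid step `h = 1/N_h`. -/
def gridh (N : ℕ) : ℝ := 1 / N

/-- The grid point `x_{i,j} = (ih, jh)` on the torus. -/
def gridPt (N : ℕ) (i j : ZMod N) : Torus :=
  (((i.val : ℝ) * gridh N : ℝ), ((j.val : ℝ) * gridh N : ℝ))

/-- Forward difference in the first direction. -/
def D1 {N : ℕ} (v : ZMod N → ZMod N → ℝ) (i j : ZMod N) : ℝ :=
  (v (i + 1) j - v i j) / gridh N

/-- Forward difference in the second direction. -/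
def D2 {N : ℕ} (v : ZMod N → ZMod N → ℝ) (i j : ZMod N) : ℝ :=
  (v i (j + 1) - v i j) / gridh N

/-- `[∇_h v]_{i,j} ∈ ℝ⁴`. -/
def nablah {N : ℕ} (v : ZMod N → ZMod N → ℝ) (i j : ZMod N) : Fin 4 → ℝ :=
  ![D1 v i j, D1 v (i - 1) j, D2 v i j, D2 v i (j - 1)]

/-- The five-point discrete Laplacian. -/
def laph {N : ℕ} (v : ZMod N → ZMod N → ℝ) (i j : ZMod N) : ℝ :=
  -(4 * v i j - v (i + 1) j - v (i - 1) j - v i (j + 1) - v i (j - 1)) / (gridh N) ^ 2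

/-- Scalar product on ℝ⁴. -/
def dot4 (p q : Fin 4 → ℝ) : ℝ := p 0 * q 0 + p 1 * q 1 + p 2 * q 2 + p 3 * q 3

/-- Euclidean norm on ℝ⁴. -/
def norm4 (p : Fin 4 → ℝ) : ℝ := Real.sqrt (dot4 p p)

/-- The discrete transport operator `𝒯_{i,j}(u,m)`. -/
def Transp {N : ℕ} (gq : Torus → (Fin 4 → ℝ) → (Fin 4 → ℝ))
    (u m : ZMod N → ZMod N → ℝ) (i j : ZMod N) : ℝ :=
  (1 / gridh N) *
    ((m i j * gq (gridPt N i j) (nablah u i j) 0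
        - m (i - 1) j * gq (gridPt N (i - 1) j) (nablah u (i - 1) j) 0
        + m (i + 1) j * gq (gridPt N (i + 1) j) (nablah u (i + 1) j) 1
        - m i j * gq (gridPt N i j) (nablah u i j) 1)
      + (m i j * gq (gridPt N i j) (nablah u i j) 2
        - m i (j - 1) * gq (gridPt N i (j - 1)) (nablah u i (j - 1)) 2
        + m i (j + 1) * gq (gridPt N i (j + 1)) (nablah u i (j + 1)) 3
        - m i j * gq (gridPt N i j) (nablah u i j) 3))

/-- Membership in the set `𝒦_h` of discrete probability densities. -/
def inKh {N : ℕ} [NeZero N] (m : ZMod N → ZMod N → ℝ) : Prop :=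
  (∀ i j, 0 ≤ m i j) ∧ (gridh N) ^ 2 * ∑ i, ∑ j, m i j = 1

/-- (g1): monotonicity of the numerical Hamiltonian. -/
def Hg1 (g : Torus → (Fin 4 → ℝ) → ℝ) : Prop :=
  ∀ x (q : Fin 4 → ℝ) (s t : ℝ), s ≤ t →
    g x (Function.update q 0 t) ≤ g x (Function.update q 0 s) ∧
    g x (Function.update q 2 t) ≤ g x (Function.update q 2 s) ∧
    g x (Function.update q 1 s) ≤ g x (Function.update q 1 t) ∧
    g x (Function.update q 3 s) ≤ g x (Function.update q 3 t)

/-- (g2): consistency with the Hamiltonian `H`. -/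
def Hg2 (g : Torus → (Fin 4 → ℝ) → ℝ) (H : Torus → ℝ × ℝ → ℝ) : Prop :=
  ∀ x (q1 q2 : ℝ), g x ![q1, q1, q2, q2] = H x (q1, q2)

/-- (g3): regularity; `g` is continuous and C¹ w.r.t. `q`, with `q`-gradient `gq`. -/
def Hg3 (g : Torus → (Fin 4 → ℝ) → ℝ) (gq : Torus → (Fin 4 → ℝ) → (Fin 4 → ℝ)) : Prop :=
  Continuous (fun p : Torus × (Fin 4 → ℝ) => g p.1 p.2) ∧
  (∀ x, ContDiff ℝ 1 (g x)) ∧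
  (∀ x (q : Fin 4 → ℝ) (i : Fin 4),
      HasDerivAt (fun t => g x (Function.update q i t)) (gq x q i) (q i))

/-- (g4): convexity of `q ↦ g(x,q)`. -/
def Hg4 (g : Torus → (Fin 4 → ℝ) → ℝ) : Prop :=
  ∀ x, ConvexOn ℝ Set.univ (g x)

/-- (g5): the growth conditions. -/
def Hg5 (g : Torus → (Fin 4 → ℝ) → ℝ) (gq : Torus → (Fin 4 → ℝ) → (Fin 4 → ℝ)) : Prop :=
  ∃ c1 c2 c3 c4 : ℝ, 0 < c1 ∧ 0 < c2 ∧ 0 < c3 ∧ 0 < c4 ∧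
    ∀ x q, c1 * (norm4 (gq x q)) ^ 2 - c2 ≤ dot4 (gq x q) q - g x q ∧
      norm4 (gq x q) ≤ c3 * norm4 q + c4

/-- The discrete Bellman equations. -/
def BellmanEq {N : ℕ} (g : Torus → (Fin 4 → ℝ) → ℝ) (ν Δt : ℝ) (F : ℝ → ℝ)
    (u m : ℕ → ZMod N → ZMod N → ℝ) (NT : ℕ) : Prop :=
  ∀ k < NT, ∀ i j, (u (k + 1) i j - u k i j) / Δt - ν * laph (u (k + 1)) i j
    + g (gridPt N i j) (nablah (u (k + 1)) i j) = F (m k i j)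

/-- The discrete Fokker–Planck equations. -/
def FPEq {N : ℕ} (gq : Torus → (Fin 4 → ℝ) → (Fin 4 → ℝ)) (ν Δt : ℝ)
    (u m : ℕ → ZMod N → ZMod N → ℝ) (NT : ℕ) : Prop :=
  ∀ k < NT, ∀ i j, (m (k + 1) i j - m k i j) / Δt + ν * laph (m k) i j
    + Transp gq (u (k + 1)) (m k) i j = 0


/-!
Summation by parts turns `∑ 𝒯(v, m) ψ(m)` into `-∑ m gq · ∇_h ψ(m)`. By (g1) the components of
`gq` have fixed signs, so each of the four edge terms is `m |gq_k|` times the difference quotient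
of `ψ(m)` towards a neighbour. Towards a smaller value of `m` that term is `≤ 0` and the matching
term of `∇_h ψ(m) · ∇_h m` is `≥ 0`; towards a larger value, concavity bounds the quotient of
`ψ(m)` by `ψ'(m)` times the quotient of `m`, and Young's inequality splits the product.
-/

lemma gridh_pos (N : ℕ) [NeZero N] : 0 < gridh N := by
  have hN : (0 : ℝ) < N := by exact_mod_cast Nat.pos_of_ne_zero (NeZero.ne N)
  rw [gridh]
  positivity

lemma Hg1.gq_signs {g : Torus → (Fin 4 → ℝ) → ℝ} {gq : Torus → (Fin 4 → ℝ) → (Fin 4 → ℝ)}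
    (hg1 : Hg1 g)
    (hgq : ∀ x q i, HasDerivAt (fun t => g x (Function.update q i t)) (gq x q i) (q i))
    (x : Torus) (q : Fin 4 → ℝ) :
    gq x q 0 ≤ 0 ∧ 0 ≤ gq x q 1 ∧ gq x q 2 ≤ 0 ∧ 0 ≤ gq x q 3 :=
  ⟨(hgq x q 0).nonpos_of_antitone fun _ _ hst => (hg1 x q _ _ hst).1,
    (hgq x q 1).nonneg_of_monotone fun _ _ hst => (hg1 x q _ _ hst).2.2.1,
    (hgq x q 2).nonpos_of_antitone fun _ _ hst => (hg1 x q _ _ hst).2.1,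
    (hgq x q 3).nonneg_of_monotone fun _ _ hst => (hg1 x q _ _ hst).2.2.2⟩

section Telescoping

variable {G M : Type*} [AddGroup G] [Fintype G] [AddCommGroup M]

lemma Fintype.sum_sub_comp_sub_right (f : G → M) (c : G) : ∑ x, (f x - f (x - c)) = 0 := by
  rw [sum_sub_distrib, Fintype.sum_equiv (Equiv.subRight c) (fun x => f (x - c)) f fun _ => rfl,
    sub_self]

lemma Fintype.sum_comp_add_right_sub (f : G → M) (c : G) : ∑ x, (f (x + c) - f x) = 0 := by
  rw [sum_sub_distrib, Fintype.sum_equiv (Equiv.addRight c) (fun x => f (x + c)) f fun _ => rfl,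
    sub_self]

end Telescoping

/-- Discrete divergence, the negative adjoint of `nablah`: the flux `A i j k` is paired with the
`k`-th one-sided difference of `nablah`. -/
def divh {N : ℕ} (A : ZMod N → ZMod N → Fin 4 → ℝ) (i j : ZMod N) : ℝ :=
  (1 / gridh N) *
    ((A i j 0 - A (i - 1) j 0 + A (i + 1) j 1 - A i j 1)
      + (A i j 2 - A i (j - 1) 2 + A i (j + 1) 3 - A i j 3))

lemma transp_eq_divh {N : ℕ} (gq : Torus → (Fin 4 → ℝ) → (Fin 4 → ℝ))
    (u m : ZMod N → ZMod N → ℝ) :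
    Transp gq u m = divh fun i j => m i j • gq (gridPt N i j) (nablah u i j) :=
  rfl

lemma sum_divh_mul {N : ℕ} [NeZero N] (A : ZMod N → ZMod N → Fin 4 → ℝ)
    (φ : ZMod N → ZMod N → ℝ) :
    ∑ i, ∑ j, divh A i j * φ i j = -∑ i, ∑ j, dot4 (A i j) (nablah φ i j) := by
  set F₀ := fun i j => A i j 0 * φ (i + 1) j
  set F₁ := fun i j => A i j 1 * φ (i - 1) j
  set F₂ := fun i j => A i j 2 * φ i (j + 1)
  set F₃ := fun i j => A i j 3 * φ i (j - 1)
  have telescope : ∀ i j, divh A i j * φ i j + dot4 (A i j) (nablah φ i j) =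
      (1 / gridh N) * ((F₀ i j - F₀ (i - 1) j) + (F₁ (i + 1) j - F₁ i j)
        + (F₂ i j - F₂ i (j - 1)) + (F₃ i (j + 1) - F₃ i j)) := by
    intro i j
    simp only [F₀, F₁, F₂, F₃, divh, dot4, nablah, D1, D2, Matrix.cons_val_zero,
      Matrix.cons_val_one, Matrix.cons_val_two, Matrix.cons_val_three, Matrix.head_cons,
      Matrix.tail_cons, sub_add_cancel, add_sub_cancel_right]
    ring
  have h₀ : ∑ i, ∑ j, (F₀ i j - F₀ (i - 1) j) = 0 := by
    simpa only [sum_sub_distrib] using Fintype.sum_sub_comp_sub_right (fun i => ∑ j, F₀ i j) 1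
  have h₁ : ∑ i, ∑ j, (F₁ (i + 1) j - F₁ i j) = 0 := by
    simpa only [sum_sub_distrib] using Fintype.sum_comp_add_right_sub (fun i => ∑ j, F₁ i j) 1
  have h₂ : ∑ i, ∑ j, (F₂ i j - F₂ i (j - 1)) = 0 :=
    sum_eq_zero fun i _ => Fintype.sum_sub_comp_sub_right (F₂ i) 1
  have h₃ : ∑ i, ∑ j, (F₃ i (j + 1) - F₃ i j) = 0 :=
    sum_eq_zero fun i _ => Fintype.sum_comp_add_right_sub (F₃ i) 1
  rw [eq_neg_iff_add_eq_zero]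
  simp_rw [← sum_add_distrib, telescope, ← mul_sum]
  simp only [sum_add_distrib, h₀, h₁, h₂, h₃, add_zero, mul_zero]

lemma mul_le_young_of_le_mul {η M p q c : ℝ} (hη : 0 < η) (hp : 0 ≤ p) (hq : 0 < q)
    (hpq : p ≤ c * q) :
    M * p ≤ η / 2 * (p * q) + 1 / (2 * η) * (M ^ 2 * c) := by
  have hsq : 0 ≤ p * (η * q - M) ^ 2 := mul_nonneg hp (sq_nonneg _)
  have hM : M ^ 2 * p ≤ M ^ 2 * (c * q) := mul_le_mul_of_nonneg_left hpq (sq_nonneg M)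
  rw [← mul_le_mul_iff_right₀ (by positivity : 0 < 2 * η * q)]
  have expand : 2 * η * q * (η / 2 * (p * q) + 1 / (2 * η) * (M ^ 2 * c))
      = η ^ 2 * (p * q ^ 2) + M ^ 2 * (c * q) := by
    field_simp
  rw [expand]
  nlinarith

lemma mul_diff_quot_le_young {ψ : ℝ → ℝ} (hmono : ∀ s t : ℝ, 0 < s → s ≤ t → ψ s ≤ ψ t)
    (hconc : ConcaveOn ℝ (Set.Ioi 0) ψ) {h η M a b c : ℝ} (hh : 0 < h) (hη : 0 < η)
    (hM : 0 ≤ M) (ha : 0 < a) (hb : 0 < b) (hc : HasDerivAt ψ c a) :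
    M * ((ψ b - ψ a) / h) ≤ η / 2 * ((ψ b - ψ a) / h * ((b - a) / h))
      + 1 / (2 * η) * (M ^ 2 * c * (if a < b then 1 else 0)) := by
  rcases lt_or_ge a b with hab | hba
  · have hslope := hconc.slope_le_of_hasDerivAt ha hb hab hc
    rw [slope_def_field, div_le_iff₀ (sub_pos.mpr hab)] at hslope
    rw [if_pos hab, mul_one]
    refine mul_le_young_of_le_mul hη (div_nonneg (sub_nonneg.mpr (hmono a b ha hab.le)) hh.le)
      (div_pos (sub_pos.mpr hab) hh) ?_
    rw [← mul_div_assoc]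
    exact div_le_div_of_nonneg_right hslope hh.le
  -- a downhill edge: both difference quotients are `≤ 0`, so no remainder is needed
  · have hψ : (ψ b - ψ a) / h ≤ 0 := div_nonpos_of_nonpos_of_nonneg
      (sub_nonpos.mpr (hmono b a hb hba)) hh.le
    have hd : (b - a) / h ≤ 0 := div_nonpos_of_nonpos_of_nonneg (sub_nonpos.mpr hba) hh.le
    rw [if_neg hba.not_gt, mul_zero, mul_zero, add_zero]
    exact (mul_nonpos_of_nonneg_of_nonpos hM hψ).trans
      (mul_nonneg (by positivity) (mul_nonneg_of_nonpos_of_nonpos hψ hd))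

lemma neg_dot4_smul_nablah_le {N : ℕ} [NeZero N] {ψ ψ' : ℝ → ℝ}
    (hmono : ∀ s t : ℝ, 0 < s → s ≤ t → ψ s ≤ ψ t) (hconc : ConcaveOn ℝ (Set.Ioi 0) ψ)
    (hderiv : ∀ s : ℝ, 0 < s → HasDerivAt ψ (ψ' s) s)
    {m : ZMod N → ZMod N → ℝ} (hm : ∀ i j, 0 < m i j) {η : ℝ} (hη : 0 < η)
    {G : Fin 4 → ℝ} (hG : G 0 ≤ 0 ∧ 0 ≤ G 1 ∧ G 2 ≤ 0 ∧ 0 ≤ G 3) (i j : ZMod N) :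
    -dot4 (m i j • G) (nablah (fun a b => ψ (m a b)) i j)
      ≤ η / 2 * dot4 (nablah (fun a b => ψ (m a b)) i j) (nablah m i j)
        + 1 / (2 * η) * (m i j ^ 2 * ψ' (m i j) *
            (G 0 ^ 2 * (if m i j < m (i + 1) j then 1 else 0)
              + G 1 ^ 2 * (if m i j < m (i - 1) j then 1 else 0)
              + G 2 ^ 2 * (if m i j < m i (j + 1) then 1 else 0)
              + G 3 ^ 2 * (if m i j < m i (j - 1) then 1 else 0))) := by
  obtain ⟨hG₀, hG₁, hG₂, hG₃⟩ := hG
  have edge := fun {M b : ℝ} (hM : 0 ≤ M) (hb : 0 < b) =>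
    mul_diff_quot_le_young hmono hconc (gridh_pos N) hη hM (hm i j) hb (hderiv _ (hm i j))
  have e₀ := edge (mul_nonneg (hm i j).le (neg_nonneg.mpr hG₀)) (hm (i + 1) j)
  have e₁ := edge (mul_nonneg (hm i j).le hG₁) (hm (i - 1) j)
  have e₂ := edge (mul_nonneg (hm i j).le (neg_nonneg.mpr hG₂)) (hm i (j + 1))
  have e₃ := edge (mul_nonneg (hm i j).le hG₃) (hm i (j - 1))
  simp only [dot4, nablah, D1, D2, Pi.smul_apply, smul_eq_mul, Matrix.cons_val_zero,
    Matrix.cons_val_one, Matrix.cons_val_two, Matrix.cons_val_three, Matrix.head_cons,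
    Matrix.tail_cons, sub_add_cancel]
  refine le_of_eq_of_le ?_ ((add_le_add (add_le_add (add_le_add e₀ e₁) e₂) e₃).trans_eq ?_) <;>
    ring

/-- Estimate on `Σ 𝒯_{i,j}(v,m) ψ(m_{i,j})` for concave nondecreasing `ψ`. -/
theorem transport_psi_estimate (N : ℕ) [NeZero N]
    (g : Torus → (Fin 4 → ℝ) → ℝ) (gq : Torus → (Fin 4 → ℝ) → (Fin 4 → ℝ))
    (hg1 : Hg1 g) (hg3 : Hg3 g gq)
    (ψ ψ' : ℝ → ℝ)
    (hψmono : ∀ s t : ℝ, 0 < s → s ≤ t → ψ s ≤ ψ t)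
    (hψconc : ConcaveOn ℝ (Set.Ioi 0) ψ)
    (hψderiv : ∀ s : ℝ, 0 < s → HasDerivAt ψ (ψ' s) s)
    (v m : ZMod N → ZMod N → ℝ) (hm : ∀ i j, 0 < m i j)
    (η : ℝ) (hη : 0 < η) :
    ∑ i, ∑ j, Transp gq v m i j * ψ (m i j)
      ≤ (η / 2) * ∑ i, ∑ j,
          dot4 (nablah (fun a b => ψ (m a b)) i j) (nablah m i j)
        + (1 / (2 * η)) * ∑ i, ∑ j, (m i j) ^ 2 * ψ' (m i j) *
            ((gq (gridPt N i j) (nablah v i j) 0) ^ 2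
                * (if m i j < m (i + 1) j then 1 else 0)
              + (gq (gridPt N i j) (nablah v i j) 1) ^ 2
                * (if m i j < m (i - 1) j then 1 else 0)
              + (gq (gridPt N i j) (nablah v i j) 2) ^ 2
                * (if m i j < m i (j + 1) then 1 else 0)
              + (gq (gridPt N i j) (nablah v i j) 3) ^ 2
                * (if m i j < m i (j - 1) then 1 else 0)) := by
  rw [transp_eq_divh, sum_divh_mul]
  simp only [mul_sum, ← sum_add_distrib, ← sum_neg_distrib]
  gcongr with i _ j _
  exact neg_dot4_smul_nablah_le hψmono hψconc hψderiv hm hη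
    (hg1.gq_signs hg3.2.2 (gridPt N i j) (nablah v i j)) i j

end
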